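/- arXiv:1511.00117 — 3 statements merged into one kernel-verified Lean document; each statement's English description precedes it below -/
import Mathlib

section
/- Let f₀ : 𝔹^N → 𝔹^N be the vectorial negation f₀(x)_i = ¬x_i. Then the set of periodic points of G_{f₀} is dense in (X, d): for every (Š, Ě) ∈ X and every ε > 0 there exist (S̃, Ẽ) ∈ X and n ≥ 1 with G_{f₀}^n(S̃,Ẽ) = (S̃,Ẽ) and d((Š,Ě),(S̃,Ẽ)) < ε. -/
open scoped BigOperators

/-- Distance between environments: number of differing cells. -/
noncomputable def dE (N : ℕ) (E F : Fin N → Bool) : ℝ :=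
  ∑ k : Fin N, if E k = F k then 0 else 1

/-- Distance between strategies. -/
noncomputable def dS (N : ℕ) (S T : ℕ → Fin N) : ℝ :=
  (9 / N) * ∑' k : ℕ, |((S k : ℕ) : ℝ) - ((T k : ℕ) : ℝ)| / 10 ^ (k + 1)

/-- The distance on the phase space `X = ⟦1,N⟧^ℕ × 𝔹^N`. -/
noncomputable def dX (N : ℕ) (X Y : (ℕ → Fin N) × (Fin N → Bool)) : ℝ :=
  dE N X.2 Y.2 + dS N X.1 Y.1

/-- `F_f(k, E)` agrees with `E` except at coordinate `k`, where it is `f(E)_k`. -/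
def Ff (N : ℕ) (f : (Fin N → Bool) → (Fin N → Bool)) (k : Fin N)
    (E : Fin N → Bool) : Fin N → Bool :=
  fun j => if j = k then f E k else E j

/-- The chaotic iterations map `G_f(S, E) = (σ S, F_f(S⁰, E))`. -/
def Gf (N : ℕ) (f : (Fin N → Bool) → (Fin N → Bool))
    (X : (ℕ → Fin N) × (Fin N → Bool)) : (ℕ → Fin N) × (Fin N → Bool) :=
  (fun n => X.1 (n + 1), Ff N f (X.1 0) X.2)

/-- The vectorial boolean negation. -/
def f0 (N : ℕ) : (Fin N → Bool) → (Fin N → Bool) := fun E i => ! E i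

/-- Metric openness in the phase space. -/
def IsOpenX (N : ℕ) (U : Set ((ℕ → Fin N) × (Fin N → Bool))) : Prop :=
  ∀ x ∈ U, ∃ ε > 0, ∀ y, dX N x y < ε → y ∈ U

/-!
Truncate the strategy of the given point to its first `m` terms and repeat them periodically,
keeping the environment. Under `G_{f₀}` each step negates the cell chosen by the strategy, so
after one period every cell has been negated once per occurrence of its index in the block;
this flip pattern depends only on the block, hence it is applied twice over two periods and
cancels. The new point lies within `10⁻ᵐ` of the original one.
-/

open Finset Function

section Dynamics

variable {N : ℕ}

theorem Gf_iterate_fst (f : (Fin N → Bool) → Fin N → Bool) (n : ℕ)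
    (X : (ℕ → Fin N) × (Fin N → Bool)) :
    ((Gf N f)^[n] X).1 = fun k => X.1 (k + n) := by
  induction n with
  | zero => rfl
  | succ n ih =>
    rw [iterate_succ_apply', Gf, ih]
    simp only [Nat.add_right_comm, Nat.add_assoc]

theorem Ff_f0_apply (k : Fin N) (E : Fin N → Bool) (j : Fin N) :
    Ff N (f0 N) k E j = (E j ^^ decide (j = k)) := by
  by_cases h : j = k <;> simp [Ff, f0, h]

theorem Gf_f0_iterate_snd (n : ℕ) (X : (ℕ → Fin N) × (Fin N → Bool)) :
    ((Gf N (f0 N))^[n] X).2 = fun j => (X.2 j ^^ decide (Odd #{i ∈ range n | X.1 i = j})) := by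
  induction n with
  | zero => simp
  | succ n ih =>
    funext j
    rw [iterate_succ_apply']
    change Ff N (f0 N) (((Gf N (f0 N))^[n] X).1 0) ((Gf N (f0 N))^[n] X).2 j = _
    rw [Ff_f0_apply, Gf_iterate_fst, ih, Bool.xor_assoc, card_filter, card_filter,
      sum_range_succ]
    by_cases h : X.1 n = j
    · simp only [h, ↓reduceIte, zero_add, decide_true, Nat.odd_add_one, decide_not, Bool.xor_true]
    · simp [h, Ne.symm h]

theorem Gf_f0_isPeriodicPt_of_periodic {S : ℕ → Fin N} {m : ℕ} (hS : Periodic S m)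
    (E : Fin N → Bool) : IsPeriodicPt (Gf N (f0 N)) (2 * m) (S, E) := by
  have hperiod : ∀ E', (Gf N (f0 N))^[m] (S, E') =
      (S, fun j => (E' j ^^ decide (Odd #{i ∈ range m | S i = j}))) := fun E' =>
    Prod.ext ((Gf_iterate_fst _ m (S, E')).trans (funext hS))
      (Gf_f0_iterate_snd m (S, E'))
  rw [IsPeriodicPt, IsFixedPt, two_mul, iterate_add_apply, hperiod, hperiod]
  simp

end Dynamics

section Distance

theorem dE_self (N : ℕ) (E : Fin N → Bool) : dE N E E = 0 := by
  simp [dE]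

theorem tsum_div_ten_pow_le {a : ℕ → ℝ} {C : ℝ} {m : ℕ} (ha : ∀ k, 0 ≤ a k)
    (haC : ∀ k, a k ≤ C) (hzero : ∀ k < m, a k = 0) :
    ∑' k, a k / 10 ^ (k + 1) ≤ C / 9 * 10⁻¹ ^ m := by
  have hbound : ∀ k, a k / 10 ^ (k + 1) ≤ C / 10 * 10⁻¹ ^ k := fun k =>
    calc a k / 10 ^ (k + 1) = a k / 10 * 10⁻¹ ^ k := by rw [pow_succ, inv_pow]; ring
      _ ≤ C / 10 * 10⁻¹ ^ k := by gcongr; exact haC k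
  have hgeom : Summable fun k : ℕ => (10⁻¹ : ℝ) ^ k :=
    summable_geometric_of_lt_one (by norm_num) (by norm_num)
  have hsum : Summable fun k => a k / 10 ^ (k + 1) :=
    .of_nonneg_of_le (fun k => div_nonneg (ha k) (by positivity)) hbound (hgeom.mul_left _)
  have htail : ∀ k, a (k + m) / 10 ^ (k + m + 1) ≤ C / 10 * 10⁻¹ ^ m * 10⁻¹ ^ k := fun k => by
    rw [mul_assoc, ← pow_add, add_comm m]
    exact hbound (k + m)
  rw [← hsum.sum_add_tsum_nat_add m, sum_eq_zero fun k hk => by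
    rw [hzero k (mem_range.mp hk), zero_div], zero_add]
  calc ∑' k, a (k + m) / 10 ^ (k + m + 1)
      ≤ ∑' k, C / 10 * 10⁻¹ ^ m * 10⁻¹ ^ k :=
        ((summable_nat_add_iff m).mpr hsum).tsum_le_tsum htail (hgeom.mul_left _)
    _ = C / 9 * 10⁻¹ ^ m := by
        rw [tsum_mul_left, tsum_geometric_of_lt_one (by norm_num) (by norm_num)]
        ring

theorem dS_le_of_eq_of_lt {N : ℕ} {S T : ℕ → Fin N} {m : ℕ} (h : ∀ k < m, S k = T k) :
    dS N S T ≤ 10⁻¹ ^ m := by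
  have hN : (0 : ℝ) < N := Nat.cast_pos.mpr (S 0).pos
  have hdiff : ∀ k, |((S k : ℕ) : ℝ) - ((T k : ℕ) : ℝ)| ≤ N := fun k => by
    have hS : ((S k : ℕ) : ℝ) < N := by exact_mod_cast (S k).is_lt
    have hT : ((T k : ℕ) : ℝ) < N := by exact_mod_cast (T k).is_lt
    rw [abs_le]
    constructor <;> linarith [(S k : ℕ).cast_nonneg (α := ℝ), (T k : ℕ).cast_nonneg (α := ℝ)]
  calc dS N S T ≤ 9 / (N : ℝ) * (N / 9 * 10⁻¹ ^ m) :=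
        mul_le_mul_of_nonneg_left
          (tsum_div_ten_pow_le (fun _ => abs_nonneg _) hdiff fun k hk => by simp [h k hk])
          (by positivity)
    _ = (10⁻¹ : ℝ) ^ m := by field_simp

end Distance

theorem periodic_points_dense_general (N : ℕ)
    (P : (ℕ → Fin N) × (Fin N → Bool)) (ε : ℝ) (hε : 0 < ε) :
    ∃ Q, ∃ n ≥ 1, (Gf N (f0 N))^[n] Q = Q ∧ dX N P Q < ε := by
  obtain ⟨m, hm⟩ := exists_pow_lt_of_lt_one hε (by norm_num : (10⁻¹ : ℝ) < 1)
  set S : ℕ → Fin N := fun k => P.1 (k % (m + 1))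
  refine ⟨(S, P.2), 2 * (m + 1), by omega,
    Gf_f0_isPeriodicPt_of_periodic ((Nat.periodic_mod (m + 1)).comp P.1) P.2, ?_⟩
  calc dX N P (S, P.2) = dS N P.1 S := by simp [dX, dE_self]
    _ ≤ 10⁻¹ ^ (m + 1) := dS_le_of_eq_of_lt fun k hk => by simp [S, Nat.mod_eq_of_lt hk]
    _ ≤ 10⁻¹ ^ m := pow_le_pow_of_le_one (by norm_num) (by norm_num) m.le_succ
    _ < ε := hm

/-- Periodic points of `G_{f₀}` are dense in `(X, d)`. -/
theorem periodic_points_dense (N : ℕ) (hN : 1 ≤ N)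
    (P : (ℕ → Fin N) × (Fin N → Bool)) (ε : ℝ) (hε : 0 < ε) :
    ∃ Q, ∃ n ≥ 1, (Gf N (f0 N))^[n] Q = Q ∧ dX N P Q < ε :=
  periodic_points_dense_general N P ε hε
end

section
/- If a continuous map f on an infinite metric space (X, d) is topologically transitive and has dense periodic points, then f has sensitive dependence on initial conditions (Banks et al. theorem, applied here to G_{f₀} on the phase space of chaotic iterations). -/
open scoped BigOperators

private lemma iter_mul_fixed {X : Type*} (f : X → X) {p : X} {m : ℕ}
    (hp : f^[m] p = p) (k : ℕ) : f^[m * k] p = p := by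
  rw [Function.iterate_mul]
  exact Function.iterate_fixed hp k

private lemma iter_mod {X : Type*} (f : X → X) {p : X} {m : ℕ}
    (hp : f^[m] p = p) (n : ℕ) : f^[n] p = f^[n % m] p := by
  conv_lhs => rw [← Nat.mod_add_div n m, Function.iterate_add_apply,
    iter_mul_fixed f hp (n / m)]

/-- Banks et al.: on an infinite metric space, a continuous, topologically
transitive map with dense periodic points is sensitive. -/
theorem banks {X : Type*} [MetricSpace X] [Infinite X] (f : X → X)
    (hf : Continuous f)
    (htrans : ∀ U V : Set X, IsOpen U → IsOpen V → U.Nonempty → V.Nonempty →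
      ∃ n : ℕ, (f^[n] '' U ∩ V).Nonempty)
    (hper : ∀ U : Set X, IsOpen U → U.Nonempty → ∃ x ∈ U, ∃ n ≥ 1, f^[n] x = x) :
    ∃ δ > (0 : ℝ), ∀ x : X, ∀ ε > (0 : ℝ),
      ∃ y, dist x y < ε ∧ ∃ n : ℕ, dist (f^[n] x) (f^[n] y) > δ := by
  classical
  -- a first periodic point
  obtain ⟨p, -, mp, hmp, hp⟩ := hper Set.univ isOpen_univ Set.univ_nonempty
  have hmp0 : 0 < mp := hmp
  set A : Finset X := (Finset.range mp).image (fun i => f^[i] p) with hA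
  have hAmem : ∀ n, f^[n] p ∈ A := by
    intro n
    rw [iter_mod f hp n]
    exact Finset.mem_image_of_mem _ (Finset.mem_range.2 (Nat.mod_lt n hmp0))
  -- a second periodic point, off the orbit of p
  have hAc : ((↑A : Set X)ᶜ).Nonempty := (A.finite_toSet.infinite_compl).nonempty
  obtain ⟨q, hqA, mq, hmq, hq⟩ := hper (↑A : Set X)ᶜ
    (A.finite_toSet.isClosed.isOpen_compl) hAc
  have hmq0 : 0 < mq := hmq
  set B : Finset X := (Finset.range mq).image (fun i => f^[i] q) with hB
  have hBmem : ∀ n, f^[n] q ∈ B := by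
    intro n
    rw [iter_mod f hq n]
    exact Finset.mem_image_of_mem _ (Finset.mem_range.2 (Nat.mod_lt n hmq0))
  -- orbits disjoint
  have hdisj : ∀ i j : ℕ, f^[i] p ≠ f^[j] q := by
    intro i j hEq
    apply hqA
    have h1 : q = f^[mq * j] q := (iter_mul_fixed f hq j).symm
    obtain ⟨t, ht⟩ : ∃ t, mq * j = t + j := by
      have : j ≤ mq * j := Nat.le_mul_of_pos_left j hmq0
      exact ⟨mq * j - j, by omega⟩
    have : q = f^[t + i] p := by
      rw [h1, ht, Function.iterate_add_apply, ← hEq, ← Function.iterate_add_apply]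
    rw [this]
    exact hAmem _
  -- minimal distance between the two orbits
  have hpA : p ∈ A := by simpa using hAmem 0
  have hqB : q ∈ B := by simpa using hBmem 0
  have hne : (A ×ˢ B).Nonempty := ⟨(p, q), Finset.mem_product.2 ⟨hpA, hqB⟩⟩
  set δ₀ : ℝ := (A ×ˢ B).inf' hne (fun z => dist z.1 z.2) with hδ₀
  have hδ₀pos : 0 < δ₀ := by
    rw [hδ₀, Finset.lt_inf'_iff]
    rintro ⟨a, b⟩ hab
    obtain ⟨ha, hb⟩ := Finset.mem_product.1 hab
    obtain ⟨i, -, hi⟩ := Finset.mem_image.1 ha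
    obtain ⟨j, -, hj⟩ := Finset.mem_image.1 hb
    exact dist_pos.2 (by rw [← hi, ← hj]; exact hdisj i j)
  have hδ₀le : ∀ i j : ℕ, δ₀ ≤ dist (f^[i] p) (f^[j] q) := by
    intro i j
    exact Finset.inf'_le _
      (Finset.mem_product.2 ⟨hAmem i, hBmem j⟩ : ((f^[i] p, f^[j] q) : X × X) ∈ A ×ˢ B)
  -- for every x, one of the two orbits stays δ₀/2 away from x
  have hfar : ∀ x : X, ∃ q' : X, ∃ m' : ℕ, 1 ≤ m' ∧ f^[m'] q' = q' ∧
      ∀ j : ℕ, δ₀ / 2 ≤ dist x (f^[j] q') := by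
    intro x
    by_cases h : ∀ j : ℕ, δ₀ / 2 ≤ dist x (f^[j] p)
    · exact ⟨p, mp, hmp, hp, h⟩
    · refine ⟨q, mq, hmq, hq, fun j => ?_⟩
      push_neg at h
      obtain ⟨i, hi⟩ := h
      by_contra hj
      push_neg at hj
      have h1 := hδ₀le i j
      have h2 := dist_triangle_left (f^[i] p) (f^[j] q) x
      linarith
  refine ⟨δ₀ / 8, by linarith, ?_⟩
  intro x ε hε
  set δ : ℝ := δ₀ / 8 with hδ
  set ε' : ℝ := min ε δ with hε'
  have hε'pos : 0 < ε' := lt_min hε (by linarith)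
  have hε'δ : ε' ≤ δ := min_le_right _ _
  -- a periodic point near x
  obtain ⟨p', hp'mem, m, hm1, hp'⟩ := hper (Metric.ball x ε') Metric.isOpen_ball
    ⟨x, Metric.mem_ball_self hε'pos⟩
  have hm0 : 0 < m := hm1
  have hp'x : dist p' x < ε' := Metric.mem_ball.1 hp'mem
  -- a periodic point far from x
  obtain ⟨q', m', -, hq', hq'far⟩ := hfar x
  -- the open set V
  set V : Set X := ⋂ i ∈ Finset.range (m + 1), f^[i] ⁻¹' Metric.ball (f^[i] q') δ with hV
  have hVopen : IsOpen V := isOpen_biInter_finset fun i _ =>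
    (Metric.isOpen_ball).preimage (hf.iterate i)
  have hq'V : q' ∈ V := by
    refine Set.mem_iInter₂.2 fun i _ => ?_
    exact Metric.mem_ball_self (by linarith)
  obtain ⟨k, w, hw⟩ := htrans (Metric.ball x ε') V Metric.isOpen_ball hVopen
    ⟨x, Metric.mem_ball_self hε'pos⟩ ⟨q', hq'V⟩
  obtain ⟨⟨y, hyU, hyw⟩, hwV⟩ := hw
  have hyx : dist y x < ε' := Metric.mem_ball.1 hyU
  set n : ℕ := m * (k / m + 1) with hn
  have hdm := Nat.div_add_mod k m
  have hkm : k % m < m := Nat.mod_lt k hm0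
  have hn' : n = m * (k / m) + m := by rw [hn, Nat.mul_succ]
  have hkn : k ≤ n := by omega
  set i : ℕ := n - k with hi
  have him : i < m + 1 := by omega
  have hnik : n = i + k := by omega
  have hfnp' : f^[n] p' = p' := iter_mul_fixed f hp' _
  have hfny : f^[n] y = f^[i] w := by
    rw [hnik, Function.iterate_add_apply, hyw]
  have hwball : f^[i] w ∈ Metric.ball (f^[i] q') δ :=
    Set.mem_iInter₂.1 hwV i (Finset.mem_range.2 him)
  have hqy : dist (f^[n] y) (f^[i] q') < δ := by
    rw [hfny]; exact Metric.mem_ball.1 hwball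
  have hxq : δ₀ / 2 ≤ dist x (f^[i] q') := hq'far i
  -- key estimate: dist (f^[n] p') (f^[n] y) > 2δ
  have hkey : 2 * δ < dist (f^[n] p') (f^[n] y) := by
    have t1 : dist x (f^[i] q') ≤ dist x p' + dist p' (f^[n] y) + dist (f^[n] y) (f^[i] q') :=
      dist_triangle4 x p' (f^[n] y) (f^[i] q')
    have t2 : dist x p' = dist p' x := dist_comm _ _
    rw [hfnp']
    have hδδ : δ₀ / 2 = 4 * δ := by rw [hδ]; ring
    linarith
  by_cases hc : δ < dist (f^[n] x) (f^[n] y)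
  · refine ⟨y, ?_, n, hc⟩
    calc dist x y = dist y x := dist_comm _ _
    _ < ε' := hyx
    _ ≤ ε := min_le_left _ _
  · push_neg at hc
    refine ⟨p', ?_, n, ?_⟩
    · calc dist x p' = dist p' x := dist_comm _ _
      _ < ε' := hp'x
      _ ≤ ε := min_le_left _ _
    · have t3 : dist (f^[n] p') (f^[n] y) ≤ dist (f^[n] p') (f^[n] x) + dist (f^[n] x) (f^[n] y) :=
        dist_triangle _ _ _
      have t4 : dist (f^[n] p') (f^[n] x) = dist (f^[n] x) (f^[n] p') := dist_comm _ _
      linarith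
end

section
/- If (S,E) ∈ X is a periodic point of G_{f₀} of period p, then for each i ∈ ⟦1,N⟧ the number of indices k ∈ {0,…,p−1} with S^k = i is even, and conversely, if S is p-periodic (σ^p(S) = S) and for each i the count of k < p with S^k = i is even, then (S,E) is periodic of period dividing into p (G_{f₀}^p(S,E) = (S,E)). -/
open scoped BigOperators

lemma iter_Gf (N : ℕ) (p : ℕ) (S : ℕ → Fin N) (E : Fin N → Bool) :
    (Gf N (f0 N))^[p] (S, E) =
      (fun n => S (n + p),
       fun i => xor (decide (Odd (((Finset.range p).filter fun k => S k = i).card))) (E i)) := by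
  induction p with
  | zero => simp
  | succ p ih =>
    rw [Function.iterate_succ_apply', ih]
    unfold Gf Ff f0
    refine Prod.ext ?_ ?_
    · funext n; simp only []; ring_nf
    · funext j
      have hcard : ∀ j : Fin N, ((Finset.range (p+1)).filter fun k => S k = j).card =
          ((Finset.range p).filter fun k => S k = j).card + (if S p = j then 1 else 0) := by
        intro j
        rw [Finset.range_add_one, Finset.filter_insert]
        split
        · rw [Finset.card_insert_of_notMem (by simp [Finset.mem_filter])]
        · simp
      simp only []
      by_cases h : j = S p
      · subst h
        simp only [if_pos rfl, hcard, if_pos rfl]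
        rcases Nat.even_or_odd (((Finset.range p).filter fun k => S k = S p).card) with he | ho
        · simp [Nat.odd_add_one.mpr (Nat.not_odd_iff_even.mpr he), Nat.not_odd_iff_even.mpr he]
        · simp [Nat.odd_add_one, ho]
      · simp [h, hcard, Ne.symm h]

/-- Characterization of periodic points of `G_{f₀}`: each cell must be
selected an even number of times per period. -/
theorem periodic_iff_even_counts (N : ℕ) (hN : 1 ≤ N) (S : ℕ → Fin N)
    (E : Fin N → Bool) (p : ℕ) (hp : 1 ≤ p) :
    ((Gf N (f0 N))^[p] (S, E) = (S, E) →
      ∀ i : Fin N, Even ((Finset.range p).filter fun k => S k = i).card) ∧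
    ((∀ k, S (k + p) = S k) →
      (∀ i : Fin N, Even ((Finset.range p).filter fun k => S k = i).card) →
      (Gf N (f0 N))^[p] (S, E) = (S, E)) := by
  constructor
  · intro h i
    have h2 := congrFun (congrArg Prod.snd h) i
    rw [iter_Gf] at h2
    simp only [] at h2
    rcases Nat.even_or_odd (((Finset.range p).filter fun k => S k = i).card) with he | ho
    · exact he
    · exfalso; simp [ho] at h2
  · intro hS hE
    rw [iter_Gf]
    refine Prod.ext ?_ ?_
    · funext n; exact hS n
    · funext i; simp [Nat.not_odd_iff_even.mpr (hE i)]
end
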